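/- Let K ≥ 1 be an integer, P > 0, and let h_1 ≥ h_2 ≥ ... ≥ h_K > 0 be channel gains. For a power vector p ∈ ℝ^K with p_k ≥ 0 and Σ_{k=1}^K p_k ≤ P, define R_k(p) = log((1 + h_k Σ_{j=1}^{k} p_j)/(1 + h_k Σ_{j=1}^{k-1} p_j)). Let θ_J ≥ 0 be a weight for each nonempty subset J ⊆ {1,...,K}, and let Γ be the set of all vectors r = (r_J)_{J nonempty, J ⊆ {1,...,K}} with r_J ≥ 0 for which there exists such a p with Σ_{J : max J = k} r_J ≤ R_k(p) for every k = 1,...,K. Then sup_{r ∈ Γ} Σ_J θ_J r_J = ∫_0^P max_{1 ≤ k ≤ K} θ̃_k/(1/h_k + z) dz, where θ̃_k = max { θ_J : J ⊆ {1,...,K}, max J = k }. -/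

import Mathlib

/-!
Every set `J` with `max J = k` is decoded by user `k`, so the weighted sum of the multicast
rates is at most `∑ₖ θ̃ₖ Rₖ(p)`, with equality when user `k`'s whole rate goes to a best-weighted
set with maximum `k`. Each term is an integral, `θ̃ₖ Rₖ(p) = ∫ θ̃ₖ / (1/hₖ + z) dz` over the
power layer `[p₁ + ⋯ + pₖ₋₁, p₁ + ⋯ + pₖ]`, hence at most the integral of the upper envelope
over that layer. Equality is reached by giving each power level `z` to a user maximizing
`θ̃ₖ / (1/hₖ + z)`: since the gains decrease, two of these curves cross at most once, so the
largest maximizing index increases with `z` and the greedy allocation consists of consecutive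
layers.
-/

open Finset Real MeasureTheory

section RateRegion

variable {ι : Type*} [Fintype ι] [LinearOrder ι]

theorem sum_filter_nonempty_eq_sum_fiber_max {M : Type*} [AddCommMonoid M] (f : Finset ι → M) :
    ∑ J ∈ univ.filter Finset.Nonempty, f J =
      ∑ k : ι, ∑ J ∈ univ.filter (fun J : Finset ι => J.max = (k : WithBot ι)), f J := by
  have hmaps : ∀ J ∈ (univ : Finset (Finset ι)).filter Finset.Nonempty,
      J.max ∈ univ.map Function.Embedding.coeWithBot := by
    intro J hJ
    obtain ⟨k, hk⟩ := max_of_nonempty (mem_filter.1 hJ).2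
    exact hk ▸ mem_map_of_mem _ (mem_univ k)
  rw [← sum_fiberwise_of_maps_to hmaps, sum_map]
  refine Finset.sum_congr rfl fun k _ => ?_
  rw [filter_filter]
  exact sum_congr (filter_congr fun J _ => and_iff_right_of_imp fun hJ => ⟨k, mem_of_max hJ⟩)
    fun _ _ => rfl

theorem sum_weight_mul_le_sum_maxWeight_mul {θ r : Finset ι → ℝ} {θt : ι → ℝ}
    (hθ : ∀ (k : ι) J, J.max = (k : WithBot ι) → θ J ≤ θt k) (hr : ∀ J, J.Nonempty → 0 ≤ r J) :
    ∑ J ∈ univ.filter Finset.Nonempty, θ J * r J ≤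
      ∑ k, θt k * ∑ J ∈ univ.filter (fun J : Finset ι => J.max = (k : WithBot ι)), r J := by
  rw [sum_filter_nonempty_eq_sum_fiber_max]
  refine sum_le_sum fun k _ => ?_
  rw [mul_sum]
  refine sum_le_sum fun J hJ => ?_
  have hJ : J.max = k := (mem_filter.1 hJ).2
  exact mul_le_mul_of_nonneg_right (hθ k J hJ) (hr J ⟨k, mem_of_max hJ⟩)

theorem exists_rates_sum_weight_mul_eq {θ : Finset ι → ℝ} {θt R : ι → ℝ}
    (hmax : ∀ k : ι, ∃ J : Finset ι, J.max = (k : WithBot ι) ∧ θ J = θt k) (hR : ∀ k, 0 ≤ R k) :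
    ∃ r : Finset ι → ℝ, (∀ J, 0 ≤ r J) ∧
      (∀ k : ι, ∑ J ∈ univ.filter (fun J : Finset ι => J.max = (k : WithBot ι)), r J = R k) ∧
      ∑ J ∈ univ.filter Finset.Nonempty, θ J * r J = ∑ k, θt k * R k := by
  choose Jmax hJmax hθJmax using hmax
  -- each fiber `{J | J.max = k}` carries its whole rate `R k` on the maximizer `Jmax k`
  let r (J : Finset ι) : ℝ := WithBot.recBotCoe 0 (fun k => if J = Jmax k then R k else 0) J.max
  have hr_fiber : ∀ (k : ι) J, J ∈ univ.filter (fun J : Finset ι => J.max = (k : WithBot ι)) →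
      r J = if J = Jmax k then R k else 0 := by
    intro k J hJ
    simp only [r, (mem_filter.1 hJ).2, WithBot.recBotCoe_coe]
  have hJmax_mem : ∀ k : ι, Jmax k ∈ univ.filter (fun J : Finset ι => J.max = (k : WithBot ι)) :=
    fun k => mem_filter.2 ⟨mem_univ _, hJmax k⟩
  refine ⟨r, fun J => ?_, fun k => ?_, ?_⟩
  · simp only [r]
    cases J.max using WithBot.recBotCoe with
    | bot => exact le_rfl
    | coe k => rw [WithBot.recBotCoe_coe]; split_ifs <;> simp [hR k]
  · rw [sum_congr rfl (hr_fiber k), sum_ite_eq', if_pos (hJmax_mem k)]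
  · rw [sum_filter_nonempty_eq_sum_fiber_max]
    refine sum_congr rfl fun k _ => ?_
    rw [sum_congr rfl fun J hJ => by rw [hr_fiber k J hJ, mul_ite, mul_zero], sum_ite_eq',
      if_pos (hJmax_mem k), hθJmax]

end RateRegion

theorem integral_div_one_div_add {c t a b : ℝ} (hc : 0 < c) (ha : 0 ≤ a) (hb : 0 ≤ b) :
    ∫ z in a..b, t / (1 / c + z) = t * log ((1 + c * b) / (1 + c * a)) := by
  simp_rw [div_eq_mul_inv t]
  rw [intervalIntegral.integral_const_mul, intervalIntegral.integral_comp_add_left (·⁻¹),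
    integral_inv_of_pos (by positivity) (by positivity)]
  congr 2
  field_simp

theorem continuousOn_div_one_div_add {c : ℝ} (hc : 0 < c) (t : ℝ) :
    ContinuousOn (fun z => t / (1 / c + z)) (Set.Ici 0) :=
  continuousOn_const.div (by fun_prop) fun z (hz : 0 ≤ z) => (by positivity : 0 < 1 / c + z).ne'

theorem div_add_le_div_add_of_le {a b t₁ t₂ z₁ z₂ : ℝ} (ha : 0 < a + z₁) (hab : a ≤ b)
    (ht₁ : 0 ≤ t₁) (hz : z₁ ≤ z₂) (hle : t₁ / (a + z₁) ≤ t₂ / (b + z₁)) :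
    t₁ / (a + z₂) ≤ t₂ / (b + z₂) := by
  rw [div_le_div_iff₀ ha (by linarith)] at hle
  rw [div_le_div_iff₀ (by linarith) (by linarith)]
  have ht : t₁ ≤ t₂ := by nlinarith
  nlinarith [mul_le_mul_of_nonneg_right ht (sub_nonneg.2 hz)]

section CumulativePower

variable {K : ℕ}

def cumPower (p : Fin K → ℝ) (n : ℕ) : ℝ :=
  ∑ j ∈ univ.filter (fun j : Fin K => (j : ℕ) < n), p j

theorem sum_filter_le_eq_cumPower (p : Fin K → ℝ) (k : Fin K) :
    ∑ j ∈ univ.filter (· ≤ k), p j = cumPower p (k + 1) := by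
  simp only [cumPower, Fin.le_def, Nat.lt_succ_iff]

theorem sum_filter_lt_eq_cumPower (p : Fin K → ℝ) (k : Fin K) :
    ∑ j ∈ univ.filter (· < k), p j = cumPower p k := by
  simp only [cumPower, Fin.lt_def]

theorem cumPower_zero (p : Fin K → ℝ) : cumPower p 0 = 0 := by
  simp [cumPower]

theorem cumPower_self (p : Fin K → ℝ) : cumPower p K = ∑ k, p k := by
  rw [cumPower, filter_true_of_mem fun j _ => j.isLt]

theorem cumPower_mono {p : Fin K → ℝ} (hp : ∀ k, 0 ≤ p k) : Monotone (cumPower p) :=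
  fun _ _ hnm => sum_le_sum_of_subset_of_nonneg
    (monotone_filter_right _ fun _ _ hj => lt_of_lt_of_le hj hnm) fun k _ _ => hp k

theorem cumPower_nonneg {p : Fin K → ℝ} (hp : ∀ k, 0 ≤ p k) (n : ℕ) : 0 ≤ cumPower p n :=
  sum_nonneg fun k _ => hp k

theorem cumPower_sub (w : ℕ → ℝ) {n : ℕ} (hn : n ≤ K) :
    cumPower (fun k : Fin K => w (k + 1) - w k) n = w n - w 0 := by
  have hrange : (univ.filter fun j : Fin K => (j : ℕ) < n).map Fin.valEmbedding = range n := by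
    ext i
    simp only [mem_map, mem_filter, Finset.mem_univ, true_and, Fin.valEmbedding_apply,
      Finset.mem_range]
    exact ⟨fun ⟨j, hj, hji⟩ => hji ▸ hj, fun hi => ⟨⟨i, by omega⟩, hi, rfl⟩⟩
  rw [cumPower, ← sum_range_sub, ← hrange, sum_map]
  rfl

end CumulativePower

section LastArgmax

variable {ι : Type*} [Fintype ι] [LinearOrder ι] [Nonempty ι]

noncomputable def lastArgmax (g : ι → ℝ → ℝ) (z : ℝ) : ι :=
  (univ.filter fun k => ∀ j, g j z ≤ g k z).max' <| by
    obtain ⟨k, -, hk⟩ := exists_max_image univ (fun k => g k z) univ_nonempty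
    exact ⟨k, mem_filter.2 ⟨mem_univ k, fun j => hk j (mem_univ j)⟩⟩

variable (g : ι → ℝ → ℝ)

theorem apply_le_apply_lastArgmax (j : ι) (z : ℝ) : g j z ≤ g (lastArgmax g z) z :=
  (mem_filter.1 (max'_mem (univ.filter fun k => ∀ j, g j z ≤ g k z) _)).2 j

theorem le_lastArgmax {k : ι} {z : ℝ} (hk : ∀ j, g j z ≤ g k z) : k ≤ lastArgmax g z :=
  le_max' _ _ (mem_filter.2 ⟨mem_univ k, hk⟩)

theorem sup'_eq_apply_lastArgmax (z : ℝ) :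
    univ.sup' univ_nonempty (fun k => g k z) = g (lastArgmax g z) z :=
  le_antisymm (sup'_le _ _ fun j _ => apply_le_apply_lastArgmax g j z)
    (le_sup' (fun k => g k z) (mem_univ _))

theorem monotoneOn_lastArgmax {s : Set ℝ}
    (hcross : ∀ j k, j ≤ k → ∀ z₁ ∈ s, ∀ z₂ ∈ s, z₁ ≤ z₂ → g j z₁ ≤ g k z₁ → g j z₂ ≤ g k z₂) :
    MonotoneOn (lastArgmax g) s := by
  intro z₁ hz₁ z₂ hz₂ hz
  by_contra! hlt
  refine (le_lastArgmax g fun i => ?_).not_gt hlt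
  calc g i z₂ ≤ g (lastArgmax g z₂) z₂ := apply_le_apply_lastArgmax g i z₂
    _ ≤ g (lastArgmax g z₁) z₂ :=
      hcross _ _ hlt.le z₁ hz₁ z₂ hz₂ hz (apply_le_apply_lastArgmax g _ z₁)

end LastArgmax

section Threshold

variable {a b : ℝ} (m : ℝ → ℕ)

/-- For `m` monotone on `[a, b]`, the point where `m` reaches `n`. -/
noncomputable def threshold (a b : ℝ) (n : ℕ) : ℝ :=
  sSup (insert a {z ∈ Set.Icc a b | m z < n})

theorem bddAbove_threshold_set (hab : a ≤ b) (n : ℕ) :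
    BddAbove (insert a {z ∈ Set.Icc a b | m z < n}) :=
  ⟨b, Set.forall_mem_insert.2 ⟨hab, fun _ hz => hz.1.2⟩⟩

theorem le_threshold (hab : a ≤ b) (n : ℕ) : a ≤ threshold m a b n :=
  le_csSup (bddAbove_threshold_set m hab n) (Set.mem_insert a _)

theorem threshold_le (hab : a ≤ b) (n : ℕ) : threshold m a b n ≤ b :=
  csSup_le (Set.insert_nonempty _ _) (Set.forall_mem_insert.2 ⟨hab, fun _ hz => hz.1.2⟩)

theorem threshold_zero : threshold m a b 0 = a := by
  simp [threshold]

theorem threshold_of_lt (hab : a ≤ b) {n : ℕ} (hn : m b < n) : threshold m a b n = b :=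
  (threshold_le m hab n).antisymm <|
    le_csSup (bddAbove_threshold_set m hab n) (Or.inr ⟨⟨hab, le_rfl⟩, hn⟩)

theorem threshold_mono (hab : a ≤ b) : Monotone (threshold m a b) := fun _ _ hnk =>
  csSup_le_csSup (bddAbove_threshold_set m hab _) (Set.insert_nonempty _ _)
    (Set.insert_subset_insert fun _ hz => ⟨hz.1, hz.2.trans_le hnk⟩)

theorem eqOn_threshold (hab : a ≤ b) (hm : MonotoneOn m (Set.Icc a b)) (n : ℕ) :
    Set.EqOn m (fun _ => n) (Set.Ioo (threshold m a b n) (threshold m a b (n + 1))) := by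
  rintro z ⟨hnz, hzn⟩
  have hz : z ∈ Set.Icc a b :=
    ⟨(le_threshold m hab n).trans hnz.le, hzn.le.trans (threshold_le m hab _)⟩
  have hn_le : n ≤ m z := by
    by_contra! hlt
    exact hnz.not_ge (le_csSup (bddAbove_threshold_set m hab n) (Or.inr ⟨hz, hlt⟩))
  obtain ⟨y, hy, hzy⟩ := exists_lt_of_lt_csSup (Set.insert_nonempty _ _) hzn
  rcases hy with rfl | ⟨hy, hyn⟩
  · exact absurd hzy (not_lt.2 hz.1)
  · exact le_antisymm (Nat.lt_succ_iff.1 ((hm hz hy hzy.le).trans_lt hyn)) hn_le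

end Threshold

theorem ContinuousOn.intervalIntegrable_of_Ici {f : ℝ → ℝ} {c a b : ℝ}
    (hf : ContinuousOn f (Set.Ici c)) (ha : c ≤ a) (hb : c ≤ b) :
    IntervalIntegrable f volume a b :=
  (hf.mono fun _ hz => (le_min ha hb).trans hz.1).intervalIntegrable

theorem sum_fin_integral_adjacent_intervals {K : ℕ} {f : ℝ → ℝ} {w : ℕ → ℝ}
    (hf : ∀ n < K, IntervalIntegrable f volume (w n) (w (n + 1))) :
    ∑ k : Fin K, ∫ z in w k..w (k + 1), f z = ∫ z in w 0..w K, f z :=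
  (Fin.sum_univ_eq_sum_range (fun n => ∫ z in w n..w (n + 1), f z) K).trans
    (intervalIntegral.sum_integral_adjacent_intervals hf)

section GaussianBroadcast

variable {K : ℕ} {h p θt : Fin K → ℝ}

noncomputable def rate (h p : Fin K → ℝ) (k : Fin K) : ℝ :=
  log ((1 + h k * ∑ j ∈ univ.filter (· ≤ k), p j) / (1 + h k * ∑ j ∈ univ.filter (· < k), p j))

theorem mul_rate_eq_integral {k : Fin K} (hk : 0 < h k) (hp : ∀ j, 0 ≤ p j) (t : ℝ) :
    t * rate h p k = ∫ z in cumPower p k..cumPower p (k + 1), t / (1 / h k + z) := by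
  rw [rate, sum_filter_le_eq_cumPower, sum_filter_lt_eq_cumPower,
    integral_div_one_div_add hk (cumPower_nonneg hp _) (cumPower_nonneg hp _)]

theorem rate_nonneg {k : Fin K} (hk : 0 < h k) (hp : ∀ j, 0 ≤ p j) : 0 ≤ rate h p k := by
  rw [rate, sum_filter_le_eq_cumPower, sum_filter_lt_eq_cumPower]
  have := cumPower_nonneg hp k
  refine log_nonneg ((one_le_div (by positivity)).2 ?_)
  gcongr
  exact cumPower_mono hp (Nat.le_succ k)

variable [Nonempty (Fin K)]

theorem continuousOn_sup'_div_one_div_add (hh : ∀ k, 0 < h k) :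
    ContinuousOn (fun z => univ.sup' univ_nonempty fun k => θt k / (1 / h k + z)) (Set.Ici 0) :=
  ContinuousOn.finset_sup'_apply _ fun k _ => continuousOn_div_one_div_add (hh k) (θt k)

theorem sum_mul_rate_le_integral_sup' {P : ℝ} (hh : ∀ k, 0 < h k) (hθt : ∀ k, 0 ≤ θt k)
    (hp : ∀ k, 0 ≤ p k) (hpP : ∑ k, p k ≤ P) :
    ∑ k, θt k * rate h p k ≤
      ∫ z in (0 : ℝ)..P, univ.sup' univ_nonempty fun k => θt k / (1 / h k + z) := by
  set F := fun z => univ.sup' univ_nonempty fun k => θt k / (1 / h k + z)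
  have hF := continuousOn_sup'_div_one_div_add (θt := θt) hh
  have hF_nonneg : ∀ z, 0 ≤ z → 0 ≤ F z := fun z hz =>
    have k := Classical.arbitrary (Fin K)
    (div_nonneg (hθt k) (by have := hh k; positivity)).trans
      (le_sup' (fun k => θt k / (1 / h k + z)) (mem_univ k))
  have hB := cumPower_nonneg hp
  have hsum_nonneg : 0 ≤ ∑ k, p k := sum_nonneg fun k _ => hp k
  calc ∑ k, θt k * rate h p k
      = ∑ k : Fin K, ∫ z in cumPower p k..cumPower p (k + 1), θt k / (1 / h k + z) :=
        sum_congr rfl fun k _ => mul_rate_eq_integral (hh k) hp (θt k)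
    _ ≤ ∑ k : Fin K, ∫ z in cumPower p k..cumPower p (k + 1), F z :=
        sum_le_sum fun k _ => intervalIntegral.integral_mono_on (cumPower_mono hp (Nat.le_succ k))
          ((continuousOn_div_one_div_add (hh k) (θt k)).intervalIntegrable_of_Ici (hB _) (hB _))
          (hF.intervalIntegrable_of_Ici (hB _) (hB _))
          fun z _ => le_sup' (fun k => θt k / (1 / h k + z)) (mem_univ k)
    _ = ∫ z in (0 : ℝ)..∑ k, p k, F z := by
        rw [sum_fin_integral_adjacent_intervals fun n _ =>
            hF.intervalIntegrable_of_Ici (hB n) (hB _), cumPower_zero, cumPower_self]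
    _ ≤ ∫ z in (0 : ℝ)..P, F z :=
        intervalIntegral.integral_mono_interval le_rfl hsum_nonneg hpP
          (ae_restrict_of_forall_mem measurableSet_Ioc fun z hz => hF_nonneg z hz.1.le)
          (hF.intervalIntegrable_of_Ici le_rfl (hsum_nonneg.trans hpP))

theorem exists_power_sum_mul_rate_eq_integral_sup' {P : ℝ} (hh : ∀ k, 0 < h k)
    (hmono : Antitone h) (hθt : ∀ k, 0 ≤ θt k) (hP : 0 ≤ P) :
    ∃ p : Fin K → ℝ, (∀ k, 0 ≤ p k) ∧ ∑ k, p k ≤ P ∧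
      ∑ k, θt k * rate h p k =
        ∫ z in (0 : ℝ)..P, univ.sup' univ_nonempty fun k => θt k / (1 / h k + z) := by
  set g : Fin K → ℝ → ℝ := fun k z => θt k / (1 / h k + z)
  have hcross : ∀ j k, j ≤ k → ∀ z₁ ∈ Set.Ici (0 : ℝ), ∀ z₂ ∈ Set.Ici (0 : ℝ), z₁ ≤ z₂ →
      g j z₁ ≤ g k z₁ → g j z₂ ≤ g k z₂ := fun j k hjk z₁ (hz₁ : 0 ≤ z₁) _ _ hz =>
    div_add_le_div_add_of_le (by have := hh j; positivity)
      (one_div_le_one_div_of_le (hh k) (hmono hjk)) (hθt j) hz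
  -- the power levels are handed out greedily: level `z` goes to the user maximizing `g · z`
  set m : ℝ → ℕ := fun z => ((lastArgmax g z : Fin K) : ℕ)
  have hm : MonotoneOn m (Set.Icc 0 P) := fun z₁ hz₁ z₂ hz₂ hz =>
    Fin.le_iff_val_le_val.1 <|
      monotoneOn_lastArgmax g hcross (Set.mem_Ici.2 hz₁.1) (Set.mem_Ici.2 hz₂.1) hz
  set w := threshold m 0 P
  have hw0 : w 0 = 0 := threshold_zero m
  have hw_nonneg : ∀ n, 0 ≤ w n := le_threshold m hP
  have hw_mono : Monotone w := threshold_mono m hP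
  have hwK : w K = P := threshold_of_lt m hP (lastArgmax g P).isLt
  set p : Fin K → ℝ := fun k => w (k + 1) - w k
  have hp : ∀ k, 0 ≤ p k := fun k => sub_nonneg.2 (hw_mono (Nat.le_succ k))
  have hpw : ∀ n ≤ K, cumPower p n = w n := fun n hn => by
    rw [cumPower_sub w hn, hw0, sub_zero]
  have hF : ∀ k : Fin K, Set.EqOn (fun z => univ.sup' univ_nonempty fun j => g j z) (g k)
      (Set.Ioo (w k) (w (k + 1))) := fun k z hz => by
    have hk : lastArgmax g z = k := Fin.ext (eqOn_threshold m hP hm k hz)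
    simp only [sup'_eq_apply_lastArgmax g z, hk]
  refine ⟨p, hp, by rw [← cumPower_self, hpw K le_rfl, hwK], ?_⟩
  calc ∑ k, θt k * rate h p k = ∑ k : Fin K, ∫ z in w k..w (k + 1), g k z :=
        sum_congr rfl fun k _ => by
          rw [mul_rate_eq_integral (hh k) hp, hpw _ k.isLt.le, hpw _ k.isLt]
    _ = ∑ k : Fin K, ∫ z in w k..w (k + 1), univ.sup' univ_nonempty fun j => g j z :=
        sum_congr rfl fun k _ =>
          (intervalIntegral.integral_congr_Ioo_of_le (hw_mono (Nat.le_succ k)) (hF k)).symm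
    _ = _ := by
        rw [sum_fin_integral_adjacent_intervals fun n _ =>
            (continuousOn_sup'_div_one_div_add hh).intervalIntegrable_of_Ici (hw_nonneg n)
              (hw_nonneg _), hw0, hwK]

end GaussianBroadcast

/-- Combination of the weighted-sum-rate reduction with the optimality of the
greedy power allocation: the maximum weighted sum of the `2^K - 1` multicast
rates over the degraded Gaussian broadcast channel region equals
`∫_0^P max_k θ̃_k/(1/h_k + z) dz` with `θ̃_k = max {θ_J : max J = k}`. -/
theorem stmt17 (K : ℕ) (hK : 1 ≤ K) (P : ℝ) (hP : 0 < P)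
    (h : Fin K → ℝ) (hh : ∀ k, 0 < h k)
    (hmono : ∀ j k : Fin K, j ≤ k → h k ≤ h j)
    (θ : Finset (Fin K) → ℝ) (hθ : ∀ J : Finset (Fin K), J.Nonempty → 0 ≤ θ J)
    (θt : Fin K → ℝ)
    (hθt : ∀ k : Fin K,
      IsGreatest {x : ℝ | ∃ J : Finset (Fin K),
        J.max = (k : WithBot (Fin K)) ∧ θ J = x} (θt k)) :
    sSup ((fun r : Finset (Fin K) → ℝ =>
        ∑ J ∈ Finset.univ.filter (fun J : Finset (Fin K) => J.Nonempty),
          θ J * r J) ''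
      {r | (∀ J : Finset (Fin K), J.Nonempty → 0 ≤ r J) ∧
        ∃ p : Fin K → ℝ, (∀ k, 0 ≤ p k) ∧ (∑ k, p k) ≤ P ∧
          ∀ k : Fin K,
            (∑ J ∈ Finset.univ.filter
                (fun J : Finset (Fin K) => J.max = (k : WithBot (Fin K))), r J)
              ≤ Real.log ((1 + h k * ∑ j ∈ Finset.univ.filter (· ≤ k), p j) /
                  (1 + h k * ∑ j ∈ Finset.univ.filter (· < k), p j))})
    = ∫ z in (0 : ℝ)..P,
        Finset.univ.sup' (Finset.univ_nonempty_iff.mpr ⟨⟨0, hK⟩⟩)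
          (fun k => θt k / (1 / h k + z)) := by
  have : Nonempty (Fin K) := ⟨⟨0, hK⟩⟩
  have hθ_le : ∀ (k : Fin K) J, J.max = (k : WithBot (Fin K)) → θ J ≤ θt k :=
    fun k J hJ => (hθt k).2 ⟨J, hJ, rfl⟩
  have hθt_nonneg : ∀ k, 0 ≤ θt k := fun k =>
    (hθ {k} (singleton_nonempty k)).trans (hθ_le k {k} max_singleton)
  refine IsGreatest.csSup_eq ⟨?_, ?_⟩
  · obtain ⟨p, hp, hpP, hp_eq⟩ :=
      exists_power_sum_mul_rate_eq_integral_sup' hh hmono hθt_nonneg hP.le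
    obtain ⟨r, hr, hr_fiber, hr_eq⟩ :=
      exists_rates_sum_weight_mul_eq (fun k => (hθt k).1) fun k => rate_nonneg (hh k) hp
    exact ⟨r, ⟨fun J _ => hr J, p, hp, hpP, fun k => (hr_fiber k).le⟩, hr_eq.trans hp_eq⟩
  · rintro _ ⟨r, ⟨hr, p, hp, hpP, hr_rate⟩, rfl⟩
    calc _ ≤ ∑ k, θt k *
            ∑ J ∈ univ.filter (fun J : Finset (Fin K) => J.max = (k : WithBot (Fin K))), r J :=
          sum_weight_mul_le_sum_maxWeight_mul hθ_le hr
      _ ≤ ∑ k, θt k * rate h p k :=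
          sum_le_sum fun k _ => mul_le_mul_of_nonneg_left (hr_rate k) (hθt_nonneg k)
      _ ≤ _ := sum_mul_rate_le_integral_sup' hh hθt_nonneg hp hpP
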